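/- Let w(v) = (1 + |v|²)^{β/2} e^{ϖ|v|²} with β > 3 and 0 < ϖ ≤ 1/8. Then there exists C > 0 such that for all measurable f, g : ℝ³ → ℝ with sup_v |w(v) f(v)/√μ(v)| < ∞ and sup_v |w(v) g(v)/√μ(v)| < ∞, the collision term Q(f,g)(v) is well defined for every v and sup_{v ∈ ℝ³} |ν(v)^{−1} w(v) Q(f,g)(v)/√μ(v)| ≤ C (sup_{v} |w(v) f(v)/√μ(v)|) (sup_{v} |w(v) g(v)/√μ(v)|). -/

import Mathlib

open Real MeasureTheory
open scoped RealInnerProductSpace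

noncomputable section

/-- Velocity space `ℝ³`. -/
abbrev V := EuclideanSpace ℝ (Fin 3)

/-- Surface measure on the unit sphere `S² ⊂ ℝ³`. -/
def sphμ : Measure (Metric.sphere (0:V) 1) := (volume : Measure V).toSphere

/-- The normalized global Maxwellian `μ(v) = (2π)^{−3/2} e^{−|v|²/2}`. -/
def gaussM (v : V) : ℝ := (2 * π) ^ (-(3:ℝ)/2) * Real.exp (-‖v‖ ^ 2 / 2)

/-- Post-collisional velocity `v' = v − ((v−u)·ω)ω`. -/
def vPrime (v u : V) (ω : Metric.sphere (0:V) 1) : V := v - ⟪v - u, (ω : V)⟫ • (ω : V)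

/-- Post-collisional velocity `u' = u + ((v−u)·ω)ω`. -/
def uPrime (v u : V) (ω : Metric.sphere (0:V) 1) : V := u + ⟪v - u, (ω : V)⟫ • (ω : V)

/-- The hard-sphere Boltzmann collision operator. -/
def Qop (F₁ F₂ : V → ℝ) (v : V) : ℝ :=
  ∫ u : V, ∫ ω : Metric.sphere (0:V) 1,
    |⟪v - u, (ω : V)⟫| * (F₁ (uPrime v u ω) * F₂ (vPrime v u ω) - F₁ u * F₂ v) ∂sphμ

/-- The collision frequency `ν(v) = ∫∫ |(v−u)·ω| μ(u) dω du`. -/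
def collFreq (v : V) : ℝ :=
  ∫ u : V, (∫ ω : Metric.sphere (0:V) 1, |⟪v - u, (ω : V)⟫| ∂sphμ) * gaussM u

/-- The weight function `w(v) = (1+|v|²)^{β/2} e^{ϖ|v|²}`. -/
def wt (β ϖ : ℝ) (v : V) : ℝ := (1 + ‖v‖ ^ 2) ^ (β / 2) * Real.exp (ϖ * ‖v‖ ^ 2)

open Metric Set
open scoped Pointwise

/-!
Energy conservation `|u'|² + |v'|² = |u|² + |v|²` gives `√μ(u')√μ(v') = √μ(u)√μ(v)` and
`w(v) ≤ w(u')w(v')`, so the weighted gain and loss terms are both bounded pointwise by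
`Mf Mg √μ(u)√μ(v)`. Integrating over the sphere produces `κ|v - u|` (rotation invariance), so
`w|Q(f,g)|/√μ ≲ Mf Mg ∫ |v - u| e^{-|u|²/4} du`, while `ν(v) ≍ ∫ |v - u| e^{-|u|²/2} du`.
Both of these Gaussian averages of `|v - u|` are comparable to `1 + |v|`: the upper bound is the
triangle inequality, the lower bound follows by symmetrising `u ↦ -u`.
-/

section SphereAverage

variable {E : Type*} [NormedAddCommGroup E] [InnerProductSpace ℝ E] [MeasurableSpace E]
  [BorelSpace E]

theorem integral_toSphere_comp_linearIsometryEquiv {G : Type*} [NormedAddCommGroup G]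
    [NormedSpace ℝ G] (μ : Measure E) (R : E ≃ₗᵢ[ℝ] E) (hR : MeasurePreserving R μ μ)
    (F : E → G) : ∫ ω : sphere (0 : E) 1, F (R ω) ∂μ.toSphere = ∫ ω, F ω ∂μ.toSphere := by
  let T : sphere (0 : E) 1 ≃ₜ sphere (0 : E) 1 := R.toHomeomorph.subtype fun x => by simp
  refine MeasurePreserving.integral_comp' (f := T.toMeasurableEquiv)
    ⟨T.toMeasurableEquiv.measurable, ?_⟩ (fun ω => F ω)
  ext s hs
  have hR_smul : ∀ A : Set E, ⇑R.symm '' (Ioo (0 : ℝ) 1 • A) = Ioo (0 : ℝ) 1 • (⇑R.symm '' A) :=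
    fun A => by simp only [← image2_smul, image_image2_distrib_right (map_smul R.symm)]
  have hT : Subtype.val '' (T ⁻¹' s) = ⇑R.symm '' (Subtype.val '' s) := by
    rw [← T.image_symm, image_image, image_image]; rfl
  rw [Measure.map_apply T.toMeasurableEquiv.measurable hs, μ.toSphere_apply' hs]
  change μ.toSphere (T ⁻¹' s) = _
  have hμ : ∀ B, μ (R.symm '' B) = μ B := fun B => by
    rw [show ⇑R.symm '' B = ⇑R ⁻¹' B from R.toEquiv.image_symm_eq_preimage B]
    exact hR.measure_preimage_emb R.toHomeomorph.measurableEmbedding B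
  rw [μ.toSphere_apply' (T.measurable hs), hT, ← hR_smul, hμ]

variable [FiniteDimensional ℝ E]

theorem exists_integral_abs_inner_toSphere [Nontrivial E] :
    ∃ κ > 0, ∀ z : E,
      ∫ ω : sphere (0 : E) 1, |⟪z, ω⟫| ∂(volume : Measure E).toSphere = κ * ‖z‖ := by
  obtain ⟨e, he⟩ := exists_norm_eq E zero_le_one
  have he_mem : e ∈ sphere (0 : E) 1 := by simpa using he
  have hcont : Continuous fun ω : sphere (0 : E) 1 => |⟪e, (ω : E)⟫| := by fun_prop
  have hint : Integrable (fun ω : sphere (0 : E) 1 => |⟪e, (ω : E)⟫|)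
      (volume : Measure E).toSphere :=
    (integrable_const 1).mono' hcont.aestronglyMeasurable (Filter.Eventually.of_forall fun ω => by
      simpa [he] using abs_real_inner_le_norm e (ω : E))
  refine ⟨_, integral_pos_of_integrable_nonneg_nonzero (x := ⟨e, he_mem⟩) hcont hint
    (fun ω => abs_nonneg _) (by simp [he]), fun z => ?_⟩
  set R : E ≃ₗᵢ[ℝ] E := Submodule.reflection (ℝ ∙ (z - ‖z‖ • e))ᗮ
  have hRz : R z = ‖z‖ • e := Submodule.reflection_sub (by simp [norm_smul, he])
  calc ∫ ω : sphere (0 : E) 1, |⟪z, ω⟫| ∂(volume : Measure E).toSphere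
      = ∫ ω : sphere (0 : E) 1, ‖z‖ * |⟪e, R ω⟫| ∂(volume : Measure E).toSphere := by
        congr 1 with ω
        rw [← R.inner_map_map, hRz, real_inner_smul_left, abs_mul, abs_norm]
    _ = ‖z‖ * ∫ ω : sphere (0 : E) 1, |⟪e, ω⟫| ∂(volume : Measure E).toSphere := by
        rw [integral_const_mul, integral_toSphere_comp_linearIsometryEquiv _ R R.measurePreserving
          (fun x => |⟪e, x⟫|)]
    _ = _ := mul_comm _ _

theorem integrable_and_abs_integral_integral_toSphere_le {v : E}
    {F : E → sphere (0 : E) 1 → ℝ} {φ : E → ℝ}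
    (hF : AEStronglyMeasurable (Function.uncurry F) (volume.prod (volume : Measure E).toSphere))
    (hφ : Continuous φ) (hφi : Integrable fun u => ‖v - u‖ * φ u)
    (hFφ : ∀ u ω, |F u ω| ≤ |⟪v - u, (ω : E)⟫| * φ u) :
    Integrable (Function.uncurry F) (volume.prod (volume : Measure E).toSphere) ∧
      |∫ u, ∫ ω, F u ω ∂(volume : Measure E).toSphere| ≤
        ∫ u, (∫ ω : sphere (0 : E) 1, |⟪v - u, (ω : E)⟫| ∂(volume : Measure E).toSphere) * φ u := by
  set k : E × sphere (0 : E) 1 → ℝ := fun p => |⟪v - p.1, (p.2 : E)⟫| * φ p.1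
  have hk : Integrable k (volume.prod (volume : Measure E).toSphere) := by
    refine (hφi.norm.mul_prod (integrable_const (1 : ℝ))).mono' (by fun_prop)
      (Filter.Eventually.of_forall fun p => ?_)
    have h := abs_real_inner_le_norm (v - p.1) (p.2 : E)
    rw [norm_eq_of_mem_sphere p.2, mul_one] at h
    simpa [k, abs_mul] using mul_le_mul_of_nonneg_right h (abs_nonneg (φ p.1))
  have hFi : Integrable (Function.uncurry F) (volume.prod (volume : Measure E).toSphere) :=
    hk.mono' hF (Filter.Eventually.of_forall fun p => hFφ p.1 p.2)
  refine ⟨hFi, ?_⟩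
  calc |∫ u, ∫ ω, F u ω ∂(volume : Measure E).toSphere|
      = |∫ p, Function.uncurry F p ∂(volume.prod (volume : Measure E).toSphere)| := by
        rw [integral_prod _ hFi]; rfl
    _ ≤ ∫ p, |Function.uncurry F p| ∂(volume.prod (volume : Measure E).toSphere) :=
        abs_integral_le_integral_abs
    _ ≤ ∫ p, k p ∂(volume.prod (volume : Measure E).toSphere) :=
        integral_mono hFi.abs hk fun p => hFφ p.1 p.2
    _ = _ := by
        rw [integral_prod k hk]
        simp only [k, integral_mul_const]

end SphereAverage

section NormSubMoment

variable {E : Type*} [NormedAddCommGroup E] [MeasurableSpace E] [BorelSpace E] {μ : Measure E}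
  {φ : E → ℝ}

theorem integrable_norm_sub_mul (hφ : Integrable φ μ) (hφ₁ : Integrable (fun u => ‖u‖ * φ u) μ)
    (v : E) : Integrable (fun u => ‖v - u‖ * φ u) μ := by
  refine ((hφ.const_mul ‖v‖).norm.add hφ₁.norm).mono'
    ((continuous_const.sub continuous_id).norm.aestronglyMeasurable.mul hφ.1)
    (Filter.Eventually.of_forall fun u => ?_)
  simp only [Pi.add_apply, norm_mul, Real.norm_eq_abs, abs_norm, ← add_mul]
  exact mul_le_mul_of_nonneg_right (norm_sub_le v u) (abs_nonneg _)

theorem integral_norm_sub_mul_le (hφ0 : 0 ≤ φ) (hφ : Integrable φ μ)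
    (hφ₁ : Integrable (fun u => ‖u‖ * φ u) μ) (v : E) :
    ∫ u, ‖v - u‖ * φ u ∂μ ≤ ‖v‖ * ∫ u, φ u ∂μ + ∫ u, ‖u‖ * φ u ∂μ := by
  rw [← integral_const_mul, ← integral_add (hφ.const_mul _) hφ₁]
  refine integral_mono (integrable_norm_sub_mul hφ hφ₁ v) ((hφ.const_mul _).add hφ₁) fun u => ?_
  simp only [← add_mul]
  exact mul_le_mul_of_nonneg_right (norm_sub_le v u) (hφ0 u)

variable [μ.IsNegInvariant]

/-- For an even weight, symmetrising `u ↦ -u` replaces `‖v - u‖` by the mean of `‖v - u‖` and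
`‖v + u‖`. -/
theorem integral_mul_le_integral_norm_sub_mul (hφ_even : ∀ u, φ (-u) = φ u) (hφ0 : 0 ≤ φ)
    (hφ : Integrable φ μ) (hφ₁ : Integrable (fun u => ‖u‖ * φ u) μ) {v : E} {c : E → ℝ}
    (hc : ∀ u, 2 * c u ≤ ‖v - u‖ + ‖v + u‖) (hcφ : Integrable (fun u => c u * φ u) μ) :
    ∫ u, c u * φ u ∂μ ≤ ∫ u, ‖v - u‖ * φ u ∂μ := by
  have h_refl : ∫ u, ‖v + u‖ * φ u ∂μ = ∫ u, ‖v - u‖ * φ u ∂μ := by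
    rw [← integral_neg_eq_self]
    simp only [hφ_even, ← sub_eq_add_neg]
  have h_int_add : Integrable (fun u => ‖v + u‖ * φ u) μ := by
    refine (integrable_norm_sub_mul hφ hφ₁ (-v)).congr (Filter.Eventually.of_forall fun u => ?_)
    simp only [← norm_neg (-v - u), neg_sub, sub_neg_eq_add, add_comm]
  have h2 : ∫ u, 2 * (c u * φ u) ∂μ ≤ ∫ u, ‖v - u‖ * φ u + ‖v + u‖ * φ u ∂μ :=
    integral_mono (hcφ.const_mul 2) ((integrable_norm_sub_mul hφ hφ₁ v).add h_int_add)
      fun u => by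
        rw [← mul_assoc, ← add_mul]
        exact mul_le_mul_of_nonneg_right (hc u) (hφ0 u)
  rw [integral_const_mul, integral_add (integrable_norm_sub_mul hφ hφ₁ v) h_int_add,
    h_refl] at h2
  linarith

end NormSubMoment

section Gaussian

variable {E : Type*} [NormedAddCommGroup E] [InnerProductSpace ℝ E] [FiniteDimensional ℝ E]
  [MeasurableSpace E] [BorelSpace E] {a b : ℝ}

theorem integrable_exp_neg_mul_norm_sq (hb : 0 < b) :
    Integrable fun u : E => exp (-(b * ‖u‖ ^ 2)) := by
  refine (GaussianFourier.integrable_cexp_neg_mul_sq_norm_add (b := b) (by simpa using hb) 0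
    (0 : E)).norm.congr (Filter.Eventually.of_forall fun u => ?_)
  simp [Complex.norm_exp, ← Complex.ofReal_pow]

theorem le_mul_exp_mul_sq (hb : 0 < b) (t : ℝ) : t ≤ (1 + 2 / b) * exp (b / 2 * t ^ 2) := by
  have h_exp := add_one_le_exp (b / 2 * t ^ 2)
  have h_poly : (1 + 2 / b) * (b / 2 * t ^ 2 + 1) = 1 + t ^ 2 + b / 2 * t ^ 2 + 2 / b := by
    field_simp; ring
  have : 0 < 2 / b := by positivity
  nlinarith [sq_nonneg (t - 1), sq_nonneg t]

theorem integrable_norm_mul_exp_neg_mul_norm_sq (hb : 0 < b) :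
    Integrable fun u : E => ‖u‖ * exp (-(b * ‖u‖ ^ 2)) := by
  refine ((integrable_exp_neg_mul_norm_sq (E := E) (half_pos hb)).const_mul (1 + 2 / b)).mono'
    (by fun_prop) (Filter.Eventually.of_forall fun u => ?_)
  have h_split : exp (-(b / 2 * ‖u‖ ^ 2)) = exp (b / 2 * ‖u‖ ^ 2) * exp (-(b * ‖u‖ ^ 2)) := by
    rw [← exp_add]; ring_nf
  rw [Real.norm_eq_abs, abs_of_nonneg (by positivity), h_split, ← mul_assoc]
  exact mul_le_mul_of_nonneg_right (le_mul_exp_mul_sq hb ‖u‖) (exp_pos _).le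

theorem integral_exp_neg_mul_norm_sq_pos (hb : 0 < b) :
    0 < ∫ u : E, exp (-(b * ‖u‖ ^ 2)) :=
  integral_pos_of_integrable_nonneg_nonzero (x := 0) (by fun_prop)
    (integrable_exp_neg_mul_norm_sq hb) (fun _ => (exp_pos _).le) (exp_pos _).ne'

variable [Nontrivial E]

theorem integral_norm_mul_exp_neg_mul_norm_sq_pos (hb : 0 < b) :
    0 < ∫ u : E, ‖u‖ * exp (-(b * ‖u‖ ^ 2)) := by
  obtain ⟨e, he⟩ := exists_norm_eq E zero_le_one
  exact integral_pos_of_integrable_nonneg_nonzero (x := e) (by fun_prop)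
    (integrable_norm_mul_exp_neg_mul_norm_sq hb) (fun _ => by positivity) (by simp [he])

theorem integral_norm_sub_mul_exp_neg_mul_norm_sq_pos (hb : 0 < b) (v : E) :
    0 < ∫ u, ‖v - u‖ * exp (-(b * ‖u‖ ^ 2)) := by
  obtain ⟨e, he⟩ := exists_norm_eq E zero_le_one
  exact integral_pos_of_integrable_nonneg_nonzero (x := v - e) (by fun_prop)
    (integrable_norm_sub_mul (integrable_exp_neg_mul_norm_sq hb)
      (integrable_norm_mul_exp_neg_mul_norm_sq hb) v) (fun _ => by positivity) (by simp [he])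

theorem exists_integral_norm_sub_mul_exp_le (ha : 0 < a) (hb : 0 < b) :
    ∃ C > 0, ∀ v : E, ∫ u, ‖v - u‖ * exp (-(a * ‖u‖ ^ 2)) ≤
      C * ∫ u, ‖v - u‖ * exp (-(b * ‖u‖ ^ 2)) := by
  set Za := ∫ u : E, exp (-(a * ‖u‖ ^ 2))
  set Ma := ∫ u : E, ‖u‖ * exp (-(a * ‖u‖ ^ 2))
  set Zb := ∫ u : E, exp (-(b * ‖u‖ ^ 2))
  set Mb := ∫ u : E, ‖u‖ * exp (-(b * ‖u‖ ^ 2))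
  have hZa : 0 < Za := integral_exp_neg_mul_norm_sq_pos ha
  have hMa : 0 < Ma := integral_norm_mul_exp_neg_mul_norm_sq_pos ha
  have hZb : 0 < Zb := integral_exp_neg_mul_norm_sq_pos hb
  have hMb : 0 < Mb := integral_norm_mul_exp_neg_mul_norm_sq_pos hb
  refine ⟨Za / Zb + Ma / Mb, by positivity, fun v => ?_⟩
  have h_even : ∀ u : E, exp (-(b * ‖-u‖ ^ 2)) = exp (-(b * ‖u‖ ^ 2)) := by simp
  have h_lower := fun c hc hcφ => integral_mul_le_integral_norm_sub_mul (μ := volume) h_even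
    (fun _ => (exp_pos _).le) (integrable_exp_neg_mul_norm_sq hb)
    (integrable_norm_mul_exp_neg_mul_norm_sq hb) (v := v) (c := c) hc hcφ
  have h_norm_v : ‖v‖ * Zb ≤ ∫ u, ‖v - u‖ * exp (-(b * ‖u‖ ^ 2)) := by
    rw [← integral_const_mul]
    refine h_lower _ (fun u => ?_) ((integrable_exp_neg_mul_norm_sq hb).const_mul _)
    have h := norm_add_le (v - u) (v + u)
    rwa [sub_add_add_cancel, ← two_smul ℝ v, norm_smul, Real.norm_two] at h
  have h_norm_u : Mb ≤ ∫ u, ‖v - u‖ * exp (-(b * ‖u‖ ^ 2)) := by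
    refine h_lower _ (fun u => ?_) (integrable_norm_mul_exp_neg_mul_norm_sq hb)
    have h := norm_sub_le (v + u) (v - u)
    rwa [add_sub_sub_cancel, ← two_smul ℝ u, norm_smul, Real.norm_two, add_comm] at h
  calc ∫ u, ‖v - u‖ * exp (-(a * ‖u‖ ^ 2))
      ≤ ‖v‖ * Za + Ma := integral_norm_sub_mul_le (fun _ => (exp_pos _).le)
        (integrable_exp_neg_mul_norm_sq ha) (integrable_norm_mul_exp_neg_mul_norm_sq ha) v
    _ = Za / Zb * (‖v‖ * Zb) + Ma / Mb * Mb := by field_simp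
    _ ≤ (Za / Zb + Ma / Mb) * ∫ u, ‖v - u‖ * exp (-(b * ‖u‖ ^ 2)) := by
      rw [add_mul]; gcongr

end Gaussian

section Collision

theorem norm_sq_uPrime_add_norm_sq_vPrime (v u : V) (ω : sphere (0 : V) 1) :
    ‖uPrime v u ω‖ ^ 2 + ‖vPrime v u ω‖ ^ 2 = ‖u‖ ^ 2 + ‖v‖ ^ 2 := by
  have hω : ‖(ω : V)‖ = 1 := norm_eq_of_mem_sphere ω
  have h_inner : ⟪v - u, (ω : V)⟫ = ⟪v, (ω : V)⟫ - ⟪u, (ω : V)⟫ := inner_sub_left _ _ _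
  simp only [uPrime, vPrime, norm_add_sq_real, norm_sub_sq_real, real_inner_smul_right,
    norm_smul, hω, Real.norm_eq_abs, mul_one, sq_abs]
  rw [h_inner]
  ring

theorem continuous_uPrime (v : V) : Continuous (Function.uncurry (uPrime v)) := by
  unfold uPrime Function.uncurry; fun_prop

theorem continuous_vPrime (v : V) : Continuous (Function.uncurry (vPrime v)) := by
  unfold vPrime Function.uncurry; fun_prop

theorem gaussM_pos (v : V) : 0 < gaussM v := by
  unfold gaussM; positivity

theorem gaussM_eq (v : V) : gaussM v = (2 * π) ^ (-(3 : ℝ) / 2) * exp (-(2⁻¹ * ‖v‖ ^ 2)) := by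
  unfold gaussM; ring_nf

theorem sqrt_gaussM (v : V) :
    √(gaussM v) = √((2 * π) ^ (-(3 : ℝ) / 2)) * exp (-(4⁻¹ * ‖v‖ ^ 2)) := by
  have h_sq : exp (-(2⁻¹ * ‖v‖ ^ 2)) = exp (-(4⁻¹ * ‖v‖ ^ 2)) ^ 2 := by
    rw [← exp_nat_mul]; ring_nf
  rw [gaussM_eq, sqrt_mul (by positivity), h_sq, sqrt_sq (exp_pos _).le]

theorem continuous_sqrt_gaussM : Continuous fun v => √(gaussM v) := by
  unfold gaussM; fun_prop

theorem integrable_norm_sub_mul_sqrt_gaussM (v : V) :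
    Integrable fun u => ‖v - u‖ * √(gaussM u) := by
  simp_rw [sqrt_gaussM, mul_left_comm ‖v - _‖]
  exact (integrable_norm_sub_mul (integrable_exp_neg_mul_norm_sq (by norm_num))
    (integrable_norm_mul_exp_neg_mul_norm_sq (by norm_num)) v).const_mul _

theorem gaussM_uPrime_mul_gaussM_vPrime (v u : V) (ω : sphere (0 : V) 1) :
    gaussM (uPrime v u ω) * gaussM (vPrime v u ω) = gaussM u * gaussM v := by
  simp only [gaussM, mul_mul_mul_comm _ (exp _), ← exp_add]
  congr 2
  linarith [norm_sq_uPrime_add_norm_sq_vPrime v u ω]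

theorem sqrt_gaussM_uPrime_mul_sqrt_gaussM_vPrime (v u : V) (ω : sphere (0 : V) 1) :
    √(gaussM (uPrime v u ω)) * √(gaussM (vPrime v u ω)) = √(gaussM u) * √(gaussM v) := by
  rw [← sqrt_mul (gaussM_pos _).le, ← sqrt_mul (gaussM_pos _).le,
    gaussM_uPrime_mul_gaussM_vPrime]

variable {β ϖ : ℝ}

theorem one_le_wt (hβ : 0 ≤ β) (hϖ : 0 ≤ ϖ) (v : V) : 1 ≤ wt β ϖ v :=
  one_le_mul_of_one_le_of_one_le (one_le_rpow (by nlinarith [sq_nonneg ‖v‖]) (by positivity))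
    (one_le_exp (by positivity))

theorem wt_pos (hβ : 0 ≤ β) (hϖ : 0 ≤ ϖ) (v : V) : 0 < wt β ϖ v :=
  one_pos.trans_le (one_le_wt hβ hϖ v)

/-- `1 + |v|² ≤ (1 + |u'|²)(1 + |v'|²)` and `|v|² ≤ |u'|² + |v'|²` by energy conservation. -/
theorem wt_le_wt_uPrime_mul_wt_vPrime (hβ : 0 ≤ β) (hϖ : 0 ≤ ϖ) (v u : V)
    (ω : sphere (0 : V) 1) : wt β ϖ v ≤ wt β ϖ (uPrime v u ω) * wt β ϖ (vPrime v u ω) := by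
  have h_energy := norm_sq_uPrime_add_norm_sq_vPrime v u ω
  have hu' := sq_nonneg ‖uPrime v u ω‖
  have hv' := sq_nonneg ‖vPrime v u ω‖
  have h_poly : (1 + ‖v‖ ^ 2) ^ (β / 2) ≤
      (1 + ‖uPrime v u ω‖ ^ 2) ^ (β / 2) * (1 + ‖vPrime v u ω‖ ^ 2) ^ (β / 2) := by
    rw [← mul_rpow (by positivity) (by positivity)]
    exact rpow_le_rpow (by positivity) (by nlinarith [sq_nonneg ‖u‖]) (by positivity)
  have h_exp :
      exp (ϖ * ‖v‖ ^ 2) ≤ exp (ϖ * ‖uPrime v u ω‖ ^ 2) * exp (ϖ * ‖vPrime v u ω‖ ^ 2) := by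
    rw [← exp_add, ← mul_add]
    exact exp_le_exp.2 (mul_le_mul_of_nonneg_left (by nlinarith [sq_nonneg ‖u‖]) hϖ)
  unfold wt
  rw [mul_mul_mul_comm]
  exact mul_le_mul h_poly h_exp (exp_pos _).le (by positivity)

variable {f g : V → ℝ} {Mf Mg : ℝ}

theorem wt_mul_abs_gain_sub_loss_le (hβ : 0 ≤ β) (hϖ : 0 ≤ ϖ)
    (hf : ∀ x, |wt β ϖ x * f x| ≤ Mf * √(gaussM x))
    (hg : ∀ x, |wt β ϖ x * g x| ≤ Mg * √(gaussM x)) (v u : V) (ω : sphere (0 : V) 1) :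
    wt β ϖ v * |f (uPrime v u ω) * g (vPrime v u ω) - f u * g v| ≤
      2 * Mf * Mg * (√(gaussM u) * √(gaussM v)) := by
  have hw := wt_pos hβ hϖ
  have hf' : ∀ x, wt β ϖ x * |f x| ≤ Mf * √(gaussM x) := fun x => by
    simpa [abs_mul, abs_of_pos (hw x)] using hf x
  have hg' : ∀ x, wt β ϖ x * |g x| ≤ Mg * √(gaussM x) := fun x => by
    simpa [abs_mul, abs_of_pos (hw x)] using hg x
  set u' := uPrime v u ω
  set v' := vPrime v u ω
  have h_gain : wt β ϖ v * (|f u'| * |g v'|) ≤ Mf * Mg * (√(gaussM u) * √(gaussM v)) :=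
    calc wt β ϖ v * (|f u'| * |g v'|)
        ≤ (wt β ϖ u' * wt β ϖ v') * (|f u'| * |g v'|) :=
          mul_le_mul_of_nonneg_right (wt_le_wt_uPrime_mul_wt_vPrime hβ hϖ v u ω) (by positivity)
      _ = (wt β ϖ u' * |f u'|) * (wt β ϖ v' * |g v'|) := by ring
      _ ≤ (Mf * √(gaussM u')) * (Mg * √(gaussM v')) :=
          mul_le_mul (hf' u') (hg' v') (by have := hw v'; positivity)
            ((by have := hw u'; positivity : 0 ≤ wt β ϖ u' * |f u'|).trans (hf' u'))
      _ = Mf * Mg * (√(gaussM u) * √(gaussM v)) := by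
          rw [← sqrt_gaussM_uPrime_mul_sqrt_gaussM_vPrime v u ω]; ring
  have h_loss : wt β ϖ v * (|f u| * |g v|) ≤ Mf * Mg * (√(gaussM u) * √(gaussM v)) :=
    calc wt β ϖ v * (|f u| * |g v|) = |f u| * (wt β ϖ v * |g v|) := by ring
      _ ≤ (wt β ϖ u * |f u|) * (Mg * √(gaussM v)) :=
          mul_le_mul (le_mul_of_one_le_left (abs_nonneg _) (one_le_wt hβ hϖ u)) (hg' v)
            (by have := hw v; positivity) (by have := hw u; positivity)
      _ ≤ (Mf * √(gaussM u)) * (Mg * √(gaussM v)) :=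
          mul_le_mul_of_nonneg_right (hf' u) ((by have := hw v; positivity :
            0 ≤ wt β ϖ v * |g v|).trans (hg' v))
      _ = Mf * Mg * (√(gaussM u) * √(gaussM v)) := by ring
  calc wt β ϖ v * |f u' * g v' - f u * g v|
      ≤ wt β ϖ v * (|f u'| * |g v'| + |f u| * |g v|) :=
        mul_le_mul_of_nonneg_left (by simpa only [abs_mul] using abs_sub (f u' * g v') (f u * g v))
          (hw v).le
    _ ≤ 2 * Mf * Mg * (√(gaussM u) * √(gaussM v)) := by rw [mul_add]; linarith

theorem integrable_collision_and_wt_mul_abs_Qop_le (hβ : 0 ≤ β) (hϖ : 0 ≤ ϖ)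
    (hfm : Measurable f) (hgm : Measurable g)
    (hf : ∀ x, |wt β ϖ x * f x| ≤ Mf * √(gaussM x))
    (hg : ∀ x, |wt β ϖ x * g x| ≤ Mg * √(gaussM x)) (v : V) :
    Integrable (fun p : V × sphere (0 : V) 1 => |⟪v - p.1, (p.2 : V)⟫| *
        (f (uPrime v p.1 p.2) * g (vPrime v p.1 p.2) - f p.1 * g v)) (volume.prod sphμ) ∧
      wt β ϖ v * |Qop f g v| ≤
        2 * Mf * Mg * √(gaussM v) * ∫ u, (∫ ω, |⟪v - u, (ω : V)⟫| ∂sphμ) * √(gaussM u) := by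
  have hwv := wt_pos hβ hϖ v
  set B := 2 * Mf * Mg * √(gaussM v) / wt β ϖ v
  have h_inner : Continuous fun p : V × sphere (0 : V) 1 => |⟪v - p.1, (p.2 : V)⟫| := by
    fun_prop
  have hF : AEStronglyMeasurable (Function.uncurry fun u (ω : sphere (0 : V) 1) =>
      |⟪v - u, (ω : V)⟫| * (f (uPrime v u ω) * g (vPrime v u ω) - f u * g v))
      (volume.prod sphμ) :=
    (h_inner.measurable.mul (((hfm.comp (continuous_uPrime v).measurable).mul
      (hgm.comp (continuous_vPrime v).measurable)).sub
      ((hfm.comp measurable_fst).mul measurable_const))).aestronglyMeasurable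
  have hFφ : ∀ u (ω : sphere (0 : V) 1),
      |(|⟪v - u, (ω : V)⟫| * (f (uPrime v u ω) * g (vPrime v u ω) - f u * g v))| ≤
        |⟪v - u, (ω : V)⟫| * (B * √(gaussM u)) := fun u ω => by
    rw [abs_mul, abs_abs]
    gcongr
    rw [div_mul_eq_mul_div, le_div_iff₀ hwv, mul_comm]
    linarith [wt_mul_abs_gain_sub_loss_le hβ hϖ hf hg v u ω]
  obtain ⟨h_int, h_le⟩ := integrable_and_abs_integral_integral_toSphere_le
    (φ := fun u => B * √(gaussM u)) hF (continuous_const.mul continuous_sqrt_gaussM)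
    ((integrable_norm_sub_mul_sqrt_gaussM v).const_mul B |>.congr
      (Filter.Eventually.of_forall fun u => by simp only; ring)) hFφ
  refine ⟨h_int, ?_⟩
  simp_rw [mul_left_comm _ B, integral_const_mul] at h_le
  calc wt β ϖ v * |Qop f g v|
      ≤ wt β ϖ v * (B * ∫ u, (∫ ω, |⟪v - u, (ω : V)⟫| ∂sphμ) * √(gaussM u)) := by
        gcongr; exact h_le
    _ = _ := by rw [← mul_assoc, mul_div_cancel₀ _ hwv.ne']

end Collision

section CollisionFrequency

theorem collFreq_eq {κ : ℝ} (hκ : ∀ z : V, ∫ ω, |⟪z, (ω : V)⟫| ∂sphμ = κ * ‖z‖) (v : V) :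
    collFreq v = κ * (2 * π) ^ (-(3 : ℝ) / 2) * ∫ u, ‖v - u‖ * exp (-(2⁻¹ * ‖u‖ ^ 2)) := by
  simp only [collFreq, hκ, gaussM_eq, ← integral_const_mul]
  congr 1 with u
  ring

theorem collFreq_pos (v : V) : 0 < collFreq v := by
  obtain ⟨κ, hκ, hK⟩ : ∃ κ > 0, ∀ z : V, ∫ ω, |⟪z, (ω : V)⟫| ∂sphμ = κ * ‖z‖ :=
    exists_integral_abs_inner_toSphere
  rw [collFreq_eq hK]
  have := integral_norm_sub_mul_exp_neg_mul_norm_sq_pos (E := V) (b := 2⁻¹) (by norm_num) v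
  positivity

theorem exists_integral_mul_sqrt_gaussM_le_collFreq :
    ∃ C > 0, ∀ v : V,
      ∫ u, (∫ ω, |⟪v - u, (ω : V)⟫| ∂sphμ) * √(gaussM u) ≤ C * collFreq v := by
  obtain ⟨κ, hκ, hK⟩ : ∃ κ > 0, ∀ z : V, ∫ ω, |⟪z, (ω : V)⟫| ∂sphμ = κ * ‖z‖ :=
    exists_integral_abs_inner_toSphere
  obtain ⟨C, hC, h_cmp⟩ := exists_integral_norm_sub_mul_exp_le (E := V) (a := 4⁻¹) (b := 2⁻¹)
    (by norm_num) (by norm_num)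
  set c := (2 * π) ^ (-(3 : ℝ) / 2)
  have hc : 0 < c := by positivity
  refine ⟨√c * C / c, by positivity, fun v => ?_⟩
  have h_sqrt : ∫ u, (∫ ω, |⟪v - u, (ω : V)⟫| ∂sphμ) * √(gaussM u) =
      κ * √c * ∫ u, ‖v - u‖ * exp (-(4⁻¹ * ‖u‖ ^ 2)) := by
    simp only [hK, sqrt_gaussM, ← integral_const_mul]
    congr 1 with u
    ring
  rw [h_sqrt, collFreq_eq hK]
  calc κ * √c * ∫ u, ‖v - u‖ * exp (-(4⁻¹ * ‖u‖ ^ 2))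
      ≤ κ * √c * (C * ∫ u, ‖v - u‖ * exp (-(2⁻¹ * ‖u‖ ^ 2))) := by gcongr; exact h_cmp v
    _ = √c * C / c * (κ * c * ∫ u, ‖v - u‖ * exp (-(2⁻¹ * ‖u‖ ^ 2))) := by field_simp

end CollisionFrequency

theorem stmt8_general (β ϖ : ℝ) (hβ : 3 < β) (hϖ0 : 0 < ϖ) :
    ∃ C > (0:ℝ), ∀ f g : V → ℝ, ∀ Mf Mg : ℝ,
      Measurable f → Measurable g →
      (∀ v, |wt β ϖ v * f v| ≤ Mf * Real.sqrt (gaussM v)) →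
      (∀ v, |wt β ϖ v * g v| ≤ Mg * Real.sqrt (gaussM v)) →
      (∀ v : V, Integrable
        (fun p : V × Metric.sphere (0:V) 1 =>
          |⟪v - p.1, (p.2 : V)⟫| *
            (f (uPrime v p.1 p.2) * g (vPrime v p.1 p.2) - f p.1 * g v))
        ((volume : Measure V).prod sphμ)) ∧
      ∀ v : V, |(collFreq v)⁻¹ * wt β ϖ v * Qop f g v / Real.sqrt (gaussM v)| ≤ C * Mf * Mg := by
  have hβ0 : 0 ≤ β := by linarith
  obtain ⟨C, hC, h_collFreq⟩ := exists_integral_mul_sqrt_gaussM_le_collFreq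
  refine ⟨2 * C, by positivity, fun f g Mf Mg hfm hgm hf hg => ?_⟩
  have h_Qop := integrable_collision_and_wt_mul_abs_Qop_le hβ0 hϖ0.le hfm hgm hf hg
  refine ⟨fun v => (h_Qop v).1, fun v => ?_⟩
  have hMf : 0 ≤ Mf := nonneg_of_mul_nonneg_left ((abs_nonneg _).trans (hf 0))
    (sqrt_pos.2 (gaussM_pos 0))
  have hMg : 0 ≤ Mg := nonneg_of_mul_nonneg_left ((abs_nonneg _).trans (hg 0))
    (sqrt_pos.2 (gaussM_pos 0))
  have hν := collFreq_pos v
  have hμ := sqrt_pos.2 (gaussM_pos v)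
  rw [abs_div, abs_mul, abs_mul, abs_inv, abs_of_pos hν, abs_of_pos (wt_pos hβ0 hϖ0.le v),
    abs_of_pos hμ, div_le_iff₀ hμ, mul_assoc, inv_mul_le_iff₀ hν]
  calc wt β ϖ v * |Qop f g v|
      ≤ 2 * Mf * Mg * √(gaussM v) * ∫ u, (∫ ω, |⟪v - u, (ω : V)⟫| ∂sphμ) * √(gaussM u) :=
        (h_Qop v).2
    _ ≤ 2 * Mf * Mg * √(gaussM v) * (C * collFreq v) := by gcongr; exact h_collFreq v
    _ = collFreq v * (2 * C * Mf * Mg * √(gaussM v)) := by ring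

/-- Weighted `L^∞` bound for the nonlinear collision operator:
`‖ν⁻¹ w Q(f,g)/√μ‖_{L^∞} ≤ C ‖w f/√μ‖_{L^∞} ‖w g/√μ‖_{L^∞}`,
together with pointwise well-definedness of `Q(f,g)`. -/
theorem stmt8 (β ϖ : ℝ) (hβ : 3 < β) (hϖ0 : 0 < ϖ) (hϖ : ϖ ≤ 1/8) :
    ∃ C > (0:ℝ), ∀ f g : V → ℝ, ∀ Mf Mg : ℝ,
      Measurable f → Measurable g →
      (∀ v, |wt β ϖ v * f v| ≤ Mf * Real.sqrt (gaussM v)) →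
      (∀ v, |wt β ϖ v * g v| ≤ Mg * Real.sqrt (gaussM v)) →
      (∀ v : V, Integrable
        (fun p : V × Metric.sphere (0:V) 1 =>
          |⟪v - p.1, (p.2 : V)⟫| *
            (f (uPrime v p.1 p.2) * g (vPrime v p.1 p.2) - f p.1 * g v))
        ((volume : Measure V).prod sphμ)) ∧
      ∀ v : V, |(collFreq v)⁻¹ * wt β ϖ v * Qop f g v / Real.sqrt (gaussM v)| ≤ C * Mf * Mg :=
  stmt8_general β ϖ hβ hϖ0

end
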